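/- For integers e ≥ 3 odd and 0 ≤ t < (e−1)/2, the partition ν_{t,e} := (t+2, t+1, ..., 3, 2, 1^{e−2t−2}) has e-core equal to the staircase partition Δ_t and e-weight equal to 1. -/

import Mathlib

/-!
A partition with at most `k` parts is encoded by the β-set `{p (k-1-i) + i | i < k}`. For
`ν_{t,e}` with `k = N + t + 1` this β-set is `[0, N] \ {N + 2t + 2 - e}` together with
`N + 2, N + 4, …, N + 2t + 2`. Moving the top bead `N + 2t + 2` down by `e` fills the gap and
gives `[0, N] ∪ {N + 2, …, N + 2t}`, the β-set of `Δ_t`. As `e ≥ 2t`, moving any of its beads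
down by `e` lands in `[0, N]`, which is full, so no further `e`-hook can be removed.
-/

/-- The partition associated to a β-set `B = {b₁ > b₂ > ⋯ > b_k} ⊆ ℕ`: its `j`-th part
(0-indexed) is `b_{j+1} − (k − 1 − j)`. -/
def betaToPart (B : Finset ℕ) (j : ℕ) : ℕ :=
  if j < B.card then (B.sort (· ≤ ·)).getD (B.card - 1 - j) 0 - (B.card - 1 - j) else 0

/-- Removing an `e`-hook from the partition with β-set `B`: replace an element
`y ∈ B` with `y ≥ e` and `y − e ∉ B` by `y − e`. -/
def hookRel (e : ℕ) (B B' : Finset ℕ) : Prop :=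
  ∃ y ∈ B, e ≤ y ∧ y - e ∉ B ∧ B' = insert (y - e) (B.erase y)

/-- A β-set has no removable `e`-hook. -/
def NoEHook (e : ℕ) (C : Finset ℕ) : Prop := ∀ y ∈ C, e ≤ y → y - e ∈ C

/-- The staircase partition `Δ_t = (t, t−1, ..., 1)`, as a function. -/
def stair (t : ℕ) : ℕ → ℕ := fun j => t - j

/-- The partition with β-set `B` has `e`-core equal to `core`: some sequence of
`e`-hook removals starting from `B` reaches a β-set with no `e`-hook whose associated
partition is `core`. -/
def HasECore (e : ℕ) (B : Finset ℕ) (core : ℕ → ℕ) : Prop :=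
  ∃ C : Finset ℕ, Relation.ReflTransGen (hookRel e) B C ∧ NoEHook e C ∧ betaToPart C = core


/-- The partition `ν_{t,e} = (t+2, t+1, ..., 3, 2, 1^{e−2t−2})`, as a function giving
its `j`-th part (0-indexed). -/
def nuPart (t e : ℕ) : ℕ → ℕ := fun j =>
  if j ≤ t then t + 2 - j
  else if j < (t + 1) + (e - 2 * t - 2) then 1 else 0

open Finset

def betaSet (k : ℕ) (p : ℕ → ℕ) : Finset ℕ :=
  (range k).image fun i => p (k - 1 - i) + i

theorem mem_betaSet {k : ℕ} {p : ℕ → ℕ} {x : ℕ} :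
    x ∈ betaSet k p ↔ ∃ i < k, p (k - 1 - i) + i = x := by
  simp [betaSet]

theorem List.le_getElem_of_sortedLT {L : List ℕ} (hL : L.SortedLT) :
    ∀ i (h : i < L.length), i ≤ L[i]
  | 0, _ => Nat.zero_le _
  | i + 1, h => by
    have := List.le_getElem_of_sortedLT hL i (by omega)
    have : L[i] < L[i + 1] := hL.getElem_lt_getElem_iff.2 (by omega)
    omega

theorem lt_card_of_betaToPart_ne_zero {B : Finset ℕ} {j : ℕ} (h : betaToPart B j ≠ 0) :
    j < B.card := by
  by_contra hj
  exact h (if_neg hj)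

theorem betaSet_card_betaToPart (B : Finset ℕ) : betaSet B.card (betaToPart B) = B := by
  have hL : (B.sort (· ≤ ·)).length = B.card := length_sort _
  have hpart : ∀ i (hi : i < B.card),
      betaToPart B (B.card - 1 - i) + i = (B.sort (· ≤ ·))[i] := by
    intro i hi
    have := List.le_getElem_of_sortedLT (sortedLT_sort B) i (by omega)
    simp only [betaToPart, if_pos (show B.card - 1 - i < B.card by omega),
      show B.card - 1 - (B.card - 1 - i) = i by omega, List.getD_eq_getElem _ _ (hL ▸ hi)]
    omega
  ext x
  rw [mem_betaSet, ← mem_sort (· ≤ ·), List.mem_iff_getElem]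
  constructor
  · rintro ⟨i, hi, rfl⟩
    exact ⟨i, by omega, (hpart i hi).symm⟩
  · rintro ⟨i, hi, rfl⟩
    exact ⟨i, by omega, hpart i (by omega)⟩

theorem strictMono_betaSet_index {p : ℕ → ℕ} (hp : Antitone p) (k : ℕ) :
    StrictMono fun i => p (k - 1 - i) + i :=
  strictMono_nat_of_lt_succ fun i => by
    have := hp (show k - 1 - (i + 1) ≤ k - 1 - i by omega)
    omega

theorem sort_betaSet {p : ℕ → ℕ} (hp : Antitone p) (k : ℕ) :
    (betaSet k p).sort (· ≤ ·) = (List.range k).map fun i => p (k - 1 - i) + i := by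
  have hf := strictMono_betaSet_index hp k
  have hmap : betaSet k p = (range k).map ⟨_, hf.injective⟩ :=
    (map_eq_image ⟨_, hf.injective⟩ (range k)).symm
  rw [hmap, ← (hf.strictMonoOn _).map_finsetSort, sort_range]
  rfl

theorem betaToPart_betaSet {p : ℕ → ℕ} (hp : Antitone p) {k : ℕ}
    (hk : ∀ j, k ≤ j → p j = 0) : betaToPart (betaSet k p) = p := by
  have hcard : (betaSet k p).card = k :=
    (card_image_of_injective _ (strictMono_betaSet_index hp k).injective).trans (card_range k)
  funext j
  simp only [betaToPart, hcard, sort_betaSet hp]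
  split_ifs with hj
  · rw [List.getD_eq_getElem _ _ (by simp; omega)]
    simp only [List.getElem_map, List.getElem_range, show k - 1 - (k - 1 - j) = j by omega]
    omega
  · exact (hk j (by omega)).symm

theorem antitone_stair (t : ℕ) : Antitone (stair t) :=
  fun _ _ hij => Nat.sub_le_sub_left hij t

theorem mem_betaSet_nuPart {t e N x : ℕ} (he : 2 * t + 2 ≤ e) (hN : e ≤ N + 2 * t + 2) :
    x ∈ betaSet (N + t + 1) (nuPart t e) ↔
      (x ≤ N ∧ x ≠ N + 2 * t + 2 - e) ∨ (N + 2 ≤ x ∧ x ≤ N + 2 * t + 2 ∧ x % 2 = N % 2) := by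
  rw [mem_betaSet]
  constructor
  · rintro ⟨i, hi, rfl⟩
    simp only [nuPart]
    split_ifs <;> omega
  · rintro (⟨hx, hxs⟩ | hx)
    · rcases Nat.lt_or_gt_of_ne hxs with hlt | hgt
      · exact ⟨x, by omega, by simp only [nuPart]; split_ifs <;> omega⟩
      · exact ⟨x - 1, by omega, by simp only [nuPart]; split_ifs <;> omega⟩
    · exact ⟨N + (x - N - 2) / 2, by omega, by simp only [nuPart]; split_ifs <;> omega⟩

theorem mem_betaSet_stair {t N x : ℕ} :
    x ∈ betaSet (N + t + 1) (stair t) ↔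
      x ≤ N ∨ (N + 2 ≤ x ∧ x ≤ N + 2 * t ∧ x % 2 = N % 2) := by
  rw [mem_betaSet]
  simp only [stair]
  constructor
  · rintro ⟨i, hi, rfl⟩
    omega
  · rintro (hx | hx)
    · exact ⟨x, by omega, by omega⟩
    · exact ⟨N + (x - N) / 2, by omega, by omega⟩

theorem hookRel_betaSet_nuPart_stair {t e N : ℕ} (he : 2 * t + 2 ≤ e)
    (hN : e ≤ N + 2 * t + 2) :
    hookRel e (betaSet (N + t + 1) (nuPart t e)) (betaSet (N + t + 1) (stair t)) := by
  refine ⟨N + 2 * t + 2, (mem_betaSet_nuPart he hN).2 (by omega), hN,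
    fun h => by rw [mem_betaSet_nuPart he hN] at h; omega, ?_⟩
  ext x
  simp only [mem_insert, mem_erase, mem_betaSet_nuPart he hN, mem_betaSet_stair]
  omega

theorem noEHook_betaSet_stair {t e : ℕ} (he : 2 * t ≤ e) (N : ℕ) :
    NoEHook e (betaSet (N + t + 1) (stair t)) := by
  intro y hy hey
  rw [mem_betaSet_stair] at hy ⊢
  omega

theorem stmt10_general (e t : ℕ) (ht : t < (e - 1) / 2)
    (B : Finset ℕ) (hB : betaToPart B = nuPart t e) :
    ∃ C : Finset ℕ, hookRel e B C ∧ NoEHook e C ∧ betaToPart C = stair t := by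
  have he : 2 * t + 3 ≤ e := by omega
  have hk : e - t - 2 < B.card :=
    lt_card_of_betaToPart_ne_zero (by rw [hB]; simp only [nuPart]; split_ifs <;> omega)
  obtain ⟨N, hN⟩ : ∃ N, B.card = N + t + 1 := ⟨B.card - t - 1, by omega⟩
  rw [← betaSet_card_betaToPart B, hB, hN]
  exact ⟨_, hookRel_betaSet_nuPart_stair (by omega) (by omega), noEHook_betaSet_stair (by omega) N,
    betaToPart_betaSet (antitone_stair t) fun j hj => by simp only [stair]; omega⟩

/-- For `e ≥ 3` odd and `0 ≤ t < (e−1)/2`, the partition `ν_{t,e}` has `e`-core the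
staircase `Δ_t` and `e`-weight `1`: removing a single `e`-hook from it yields a
partition with no `e`-hook, equal to `Δ_t`. -/
theorem stmt10 (e t : ℕ) (he : Odd e) (he3 : 3 ≤ e) (ht : t < (e - 1) / 2)
    (B : Finset ℕ) (hB : betaToPart B = nuPart t e) :
    ∃ C : Finset ℕ, hookRel e B C ∧ NoEHook e C ∧ betaToPart C = stair t :=
  stmt10_general e t ht B hB
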